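/- Let D be an L×N matrix whose columns have unit Euclidean norm, partitioned into M = N/d column-blocks D[ℓ] of size L×d. Then the block-coherence μ_B = max_{ℓ≠r} (1/d)·ρ(D[ℓ]^H D[r]) satisfies 0 ≤ μ_B ≤ 1, where ρ denotes the largest singular value. -/

import Mathlib

open Matrix

noncomputable def rho {m n : Type*} [Fintype m] [Fintype n] [DecidableEq n]
    (A : Matrix m n ℂ) : ℝ :=
  ‖LinearMap.toContinuousLinearMap (Matrix.toEuclideanLin A)‖

noncomputable def enorm2 {n : Type*} [Fintype n] (v : n → ℂ) : ℝ :=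
  Real.sqrt (∑ i, ‖v i‖ ^ 2)

def blk {α β γ : Type*} (D : Matrix α (β × γ) ℂ) (ℓ : β) : Matrix α γ ℂ :=
  Matrix.of fun i j => D i (ℓ, j)

def blk2 {ι κ d₁ d₂ : Type*} (A : Matrix (ι × d₁) (κ × d₂) ℂ) (ℓ : ι) (r : κ) :
    Matrix d₁ d₂ ℂ :=
  Matrix.of fun i j => A (ℓ, i) (r, j)

noncomputable def rhoc {ι κ d : Type*} [Fintype ι] [Fintype κ] [Fintype d] [DecidableEq d]
    (A : Matrix (ι × d) (κ × d) ℂ) : ℝ :=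
  ⨆ r : κ, ∑ ℓ : ι, rho (blk2 A ℓ r)

noncomputable def vnorm1 {ι d : Type*} [Fintype ι] [Fintype d] (v : ι × d → ℂ) : ℝ :=
  ∑ ℓ : ι, enorm2 (fun j => v (ℓ, j))

noncomputable def vnormInf {ι d : Type*} [Fintype ι] [Fintype d] (v : ι × d → ℂ) : ℝ :=
  ⨆ ℓ : ι, enorm2 (fun j => v (ℓ, j))

noncomputable def pinv {α n : Type*} [Fintype α] [Fintype n] [DecidableEq n]
    (B : Matrix α n ℂ) : Matrix n α ℂ :=
  (Bᴴ * B)⁻¹ * Bᴴ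

noncomputable def muB {L M d : ℕ} (D : Matrix (Fin L) (Fin M × Fin d) ℂ) : ℝ :=
  ⨆ p : {p : Fin M × Fin M // p.1 ≠ p.2},
    (1 / (d : ℝ)) * rho ((blk D p.val.1)ᴴ * blk D p.val.2)

/-!
Every block `D[ℓ]` has `d` unit columns, so its spectral norm is at most its Frobenius norm `√d`.
Submultiplicativity and `ρ(Aᴴ) = ρ(A)` then give `ρ(D[ℓ]ᴴ D[r]) ≤ d`.
-/

open scoped Matrix.Norms.L2Operator

section Rho

variable {m n p : Type*} [Fintype m] [Fintype n] [Fintype p]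

lemma rho_nonneg [DecidableEq n] (A : Matrix m n ℂ) : 0 ≤ rho A :=
  norm_nonneg _

lemma rho_conjTranspose_mul_le [DecidableEq m] [DecidableEq n] [DecidableEq p]
    (A : Matrix m n ℂ) (B : Matrix m p ℂ) : rho (Aᴴ * B) ≤ rho A * rho B :=
  calc ‖Aᴴ * B‖ ≤ ‖Aᴴ‖ * ‖B‖ := Matrix.l2_opNorm_mul _ _
    _ = ‖A‖ * ‖B‖ := by rw [Matrix.l2_opNorm_conjTranspose]

lemma rho_le_sqrt_sum_sq [DecidableEq n] (A : Matrix m n ℂ) :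
    rho A ≤ √(∑ i, ∑ j, ‖A i j‖ ^ 2) := by
  refine ContinuousLinearMap.opNorm_le_bound _ (Real.sqrt_nonneg _) fun x => ?_
  have hrow : ∀ i, ‖∑ j, A i j * x j‖ ^ 2 ≤ (∑ j, ‖A i j‖ ^ 2) * ∑ j, ‖x j‖ ^ 2 := fun i =>
    calc ‖∑ j, A i j * x j‖ ^ 2 ≤ (∑ j, ‖A i j‖ * ‖x j‖) ^ 2 := by
          gcongr
          exact (norm_sum_le _ _).trans_eq (by simp only [norm_mul])
      _ ≤ (∑ j, ‖A i j‖ ^ 2) * ∑ j, ‖x j‖ ^ 2 := Finset.sum_mul_sq_le_sq_mul_sq _ _ _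
  rw [← pow_le_pow_iff_left₀ (norm_nonneg _) (by positivity) two_ne_zero, mul_pow,
    Real.sq_sqrt (by positivity), EuclideanSpace.norm_sq_eq, EuclideanSpace.norm_sq_eq,
    Finset.sum_mul]
  exact Finset.sum_le_sum fun i _ => hrow i

lemma rho_le_sqrt_card_of_enorm2_col_eq_one [DecidableEq n] (A : Matrix m n ℂ)
    (hcol : ∀ j, enorm2 (fun i => A i j) = 1) : rho A ≤ √(Fintype.card n) := by
  have hcol_sq : ∀ j, ∑ i, ‖A i j‖ ^ 2 = 1 := fun j => Real.sqrt_eq_one.mp (hcol j)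
  refine (rho_le_sqrt_sum_sq A).trans_eq ?_
  rw [Finset.sum_comm]
  simp only [hcol_sq, Finset.sum_const, Finset.card_univ, nsmul_eq_mul, mul_one]

lemma rho_conjTranspose_mul_le_card_of_enorm2_col_eq_one [DecidableEq m] [DecidableEq n]
    (A B : Matrix m n ℂ) (hA : ∀ j, enorm2 (fun i => A i j) = 1)
    (hB : ∀ j, enorm2 (fun i => B i j) = 1) : rho (Aᴴ * B) ≤ Fintype.card n :=
  calc rho (Aᴴ * B) ≤ rho A * rho B := rho_conjTranspose_mul_le A B
    _ ≤ √(Fintype.card n) * √(Fintype.card n) :=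
        mul_le_mul (rho_le_sqrt_card_of_enorm2_col_eq_one A hA)
          (rho_le_sqrt_card_of_enorm2_col_eq_one B hB) (rho_nonneg _) (Real.sqrt_nonneg _)
    _ = Fintype.card n := Real.mul_self_sqrt (Nat.cast_nonneg _)

end Rho

theorem block_coherence_between_zero_and_one_general (L M d : ℕ)
    (D : Matrix (Fin L) (Fin M × Fin d) ℂ)
    (hcol : ∀ c : Fin M × Fin d, enorm2 (fun i => D i c) = 1) :
    0 ≤ muB D ∧ muB D ≤ 1 := by
  refine ⟨Real.iSup_nonneg fun p => mul_nonneg (by positivity) (rho_nonneg _),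
    Real.iSup_le (fun p => ?_) zero_le_one⟩
  have hrho : rho ((blk D p.val.1)ᴴ * blk D p.val.2) ≤ d := by
    simpa using rho_conjTranspose_mul_le_card_of_enorm2_col_eq_one (blk D p.val.1)
      (blk D p.val.2) (fun j => hcol (p.val.1, j)) (fun j => hcol (p.val.2, j))
  calc 1 / (d : ℝ) * rho ((blk D p.val.1)ᴴ * blk D p.val.2) ≤ 1 / d * d := by gcongr
    _ ≤ 1 := by rw [one_div_mul_eq_div]; exact div_self_le_one _

theorem block_coherence_between_zero_and_one (L M d : ℕ) (hd : 0 < d)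
    (D : Matrix (Fin L) (Fin M × Fin d) ℂ)
    (hcol : ∀ c : Fin M × Fin d, enorm2 (fun i => D i c) = 1) :
    0 ≤ muB D ∧ muB D ≤ 1 :=
  block_coherence_between_zero_and_one_general L M d D hcol
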